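/- arXiv:2307.04026 — 2 statements merged into one kernel-verified Lean document; each statement's English description precedes it below -/
import Mathlib

section
/- Let f : S → ℝ be a bounded function on the family S of closed counterclockwise arcs of the unit circle S¹, with f of every degenerate arc equal to 0, and suppose that for any points x₁, x₂, x₃, x₄ in counterclockwise order on S¹ (so that the arc from x₂ to x₃ is contained in the arc from x₁ to x₄) we have f(arc(x₁,x₃)) + f(arc(x₂,x₄)) ≥ f(arc(x₁,x₄)) + f(arc(x₂,x₃)). For n ≥ 3, define Mₙ = sup { Σ_{S∈X} f(S) : X ⊂ S is a tiling of S¹ with |X| = n }. Then the sequence {Mₙ} is concave, i.e., M_{n-1} + M_{n+1} ≤ 2Mₙ for all n ≥ 4. -/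
/-!
Let `x` and `y` be tilings by `n + 1` and `n - 1` arcs. Rotating them, we may assume that their
first points `x₀ ≤ y₀` are the two smallest of the `2n` left endpoints and that every left endpoint
lies in `[x₀, x₀ + 2π]`. Sorting the left endpoints as `z₀ ≤ ⋯ ≤ z_{2n-1}` and putting
`z_{2n} = x₀ + 2π`, `z_{2n+1} = y₀ + 2π`, the right endpoints are exactly `z₂, …, z_{2n+1}`.
The quadrangle inequality says that uncrossing two nested arcs does not decrease the total, so
matching sorted left endpoints with sorted right endpoints, i.e. taking the arcs `[z_t, z_{t+2}]`,
does at least as well as the two given tilings. The arcs with even `t` and those with odd `t` form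
two tilings by `n` arcs, so the total is at most `2 Mₙ`.
-/

open Finset

/-- `Mseq f n` : the supremum of `∑ f(arcs)` over tilings of the circle by `n` arcs,
where arcs are parametrized by pairs of angles and a tiling by `n` arcs corresponds to a
monotone sequence of `n+1` angles starting at some `x 0` and ending at `x 0 + 2π`. -/
noncomputable def Mseq (f : ℝ → ℝ → ℝ) (n : ℕ) : ℝ :=
  sSup {s | ∃ x : Fin (n + 1) → ℝ, Monotone x ∧ x (Fin.last n) = x 0 + 2 * Real.pi ∧
    s = ∑ i : Fin n, f (x i.castSucc) (x i.succ)}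

open Real

theorem Function.Periodic.sum_range_add {M : Type*} [AddCancelCommMonoid M] {g : ℕ → M} {p : ℕ}
    (hg : Function.Periodic g p) (k : ℕ) :
    ∑ i ∈ range p, g (k + i) = ∑ i ∈ range p, g i := by
  induction k with
  | zero => simp
  | succ k ih =>
    have h := (sum_range_succ' (fun i => g (k + i)) p).symm.trans (sum_range_succ _ p)
    rw [add_zero, hg, ih] at h
    simpa only [← add_assoc, add_right_comm k 1] using add_right_cancel h

theorem Finset.sum_range_two_mul {M : Type*} [AddCommMonoid M] (g : ℕ → M) (n : ℕ) :
    ∑ t ∈ range (2 * n), g t = ∑ i ∈ range n, g (2 * i) + ∑ i ∈ range n, g (2 * i + 1) := by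
  induction n with
  | zero => simp
  | succ n ih =>
    rw [Nat.mul_succ, sum_range_succ, sum_range_succ, ih, sum_range_succ, sum_range_succ]
    abel

theorem List.Pairwise.monotone_getD {α : Type*} [Preorder α] {L : List α}
    (hL : L.Pairwise (· ≤ ·)) {d : α} (hd : ∀ x ∈ L, x ≤ d) : Monotone (fun t => L.getD t d) := by
  intro i j hij
  by_cases hj : j < L.length
  · simp only [List.getD_eq_getElem _ _ hj, List.getD_eq_getElem _ _ (hij.trans_lt hj)]
    rcases hij.lt_or_eq with h | rfl
    · exact List.pairwise_iff_getElem.1 hL _ _ _ _ h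
    · exact le_rfl
  · simp only [List.getD_eq_default _ _ (not_lt.1 hj)]
    by_cases hi : i < L.length
    · rw [List.getD_eq_getElem _ _ hi]
      exact hd _ (List.getElem_mem hi)
    · rw [List.getD_eq_default _ _ (not_lt.1 hi)]

theorem List.map_getD_range {α : Type*} {L : List α} {n : ℕ} (hn : n ≤ L.length) (d : α) :
    (List.range n).map (fun t => L.getD t d) = L.take n :=
  List.ext_getElem (by simp [hn]) fun t h₁ h₂ => by
    simp only [List.getElem_map, List.getElem_range, List.getElem_take]
    exact List.getD_eq_getElem _ _ _

theorem Multiset.map_range_succ' {α : Type*} (g : ℕ → α) (n : ℕ) :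
    (Multiset.range (n + 1)).map g = g 0 ::ₘ (Multiset.range n).map (fun i => g (i + 1)) := by
  rw [← Multiset.coe_range, List.range_succ_eq_map]
  simp [← Multiset.cons_coe, Function.comp_def]
  rfl

theorem Monotone.exists_le_lt_succ {α : Type*} [LinearOrder α] {X : ℕ → α} (hX : Monotone X)
    (hX' : ∀ c, ∃ t, c < X t) {k₀ : ℕ} {c : α} (hc : X k₀ ≤ c) :
    ∃ k, k₀ ≤ k ∧ X k ≤ c ∧ c < X (k + 1) := by
  classical
  have hex : ∃ i, c < X (k₀ + i + 1) := by
    obtain ⟨t, ht⟩ := hX' c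
    exact ⟨t, ht.trans_le (hX (by omega))⟩
  refine ⟨k₀ + Nat.find hex, by omega, ?_, Nat.find_spec hex⟩
  rcases Nat.eq_zero_or_eq_succ_pred (Nat.find hex) with h | h
  · rwa [h]
  · rw [h]
    exact not_lt.1 (Nat.find_min hex (Nat.pred_lt (by omega)))

theorem Monotone.le_of_mem_map_range_succ {α : Type*} [Preorder α] {l : ℕ → α}
    (hl : Monotone l) {m : ℕ} {x : α} (hx : x ∈ (Multiset.range (m + 1)).map l) : x ≤ l m := by
  obtain ⟨t, ht, rfl⟩ := Multiset.mem_map.1 hx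
  exact hl (Nat.lt_succ_iff.1 (Multiset.mem_range.1 ht))

variable {f : ℝ → ℝ → ℝ}

def IsArc (s : ℝ × ℝ) : Prop :=
  s.1 ≤ s.2 ∧ s.2 ≤ s.1 + 2 * π

def QuadrangleIneq (f : ℝ → ℝ → ℝ) : Prop :=
  ∀ a b c d : ℝ, a ≤ b → b ≤ c → c ≤ d → d ≤ a + 2 * π → f a d + f b c ≤ f a c + f b d

theorem QuadrangleIneq.exists_exchange (hf : QuadrangleIneq f) {S : Multiset (ℝ × ℝ)}
    (hS : ∀ s ∈ S, IsArc s) {a b : ℝ} (ha : a ∈ S.map Prod.fst) (hb : b ∈ S.map Prod.snd)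
    (haS : ∀ s ∈ S, s.1 ≤ a) (hbS : ∀ s ∈ S, s.2 ≤ b) :
    ∃ T : Multiset (ℝ × ℝ), (∀ s ∈ T, IsArc s) ∧ S.map Prod.fst = a ::ₘ T.map Prod.fst ∧
      S.map Prod.snd = b ::ₘ T.map Prod.snd ∧
      (S.map fun s => f s.1 s.2).sum ≤ f a b + (T.map fun s => f s.1 s.2).sum := by
  obtain ⟨⟨a, r⟩, har, rfl⟩ := Multiset.mem_map.1 ha
  obtain ⟨⟨l, b⟩, hlb, rfl⟩ := Multiset.mem_map.1 hb
  by_cases he : (a, r) = (l, b)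
  · obtain ⟨rfl, rfl⟩ := Prod.mk.inj he
    refine ⟨S.erase (a, r), fun s hs => hS s (Multiset.mem_of_mem_erase hs), ?_, ?_, ?_⟩ <;>
      conv_lhs => rw [← Multiset.cons_erase har]
    all_goals simp
  · obtain ⟨U, rfl⟩ : ∃ U, S = (a, r) ::ₘ (l, b) ::ₘ U :=
      ⟨_, by rw [Multiset.cons_erase (Multiset.mem_erase_of_ne (Ne.symm he) |>.2 hlb),
        Multiset.cons_erase har]⟩
    have hl : l ≤ a := haS (l, b) (by simp)
    have hr : r ≤ b := hbS (a, r) (by simp)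
    obtain ⟨har₁, -⟩ := hS (a, r) (by simp)
    obtain ⟨-, hlb₂⟩ := hS (l, b) (by simp)
    refine ⟨(l, r) ::ₘ U, ?_, by simp, by simp [Multiset.cons_swap], ?_⟩
    · simp only [Multiset.mem_cons, forall_eq_or_imp]
      exact ⟨⟨hl.trans har₁, hr.trans hlb₂⟩, fun s hs => hS s (by simp [hs])⟩
    · have := hf l a r b hl har₁ hr hlb₂
      simp only [Multiset.map_cons, Multiset.sum_cons]
      linarith

/-- Matching sorted left endpoints with sorted right endpoints maximizes the total weight. -/
theorem QuadrangleIneq.sum_le_sum_range (hf : QuadrangleIneq f) {l r : ℕ → ℝ}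
    (hl : Monotone l) (hr : Monotone r) (m : ℕ) {S : Multiset (ℝ × ℝ)}
    (hS : ∀ s ∈ S, IsArc s) (hSl : S.map Prod.fst = (Multiset.range m).map l)
    (hSr : S.map Prod.snd = (Multiset.range m).map r) :
    (S.map fun s => f s.1 s.2).sum ≤ ∑ t ∈ range m, f (l t) (r t) := by
  induction m generalizing S with
  | zero =>
    obtain rfl : S = 0 := by simpa using hSl
    simp
  | succ m ih =>
    have hla (s) (hs : s ∈ S) : s.1 ≤ l m :=
      hl.le_of_mem_map_range_succ (hSl ▸ Multiset.mem_map_of_mem _ hs)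
    have hrb (s) (hs : s ∈ S) : s.2 ≤ r m :=
      hr.le_of_mem_map_range_succ (hSr ▸ Multiset.mem_map_of_mem _ hs)
    rw [Multiset.range_succ, Multiset.map_cons] at hSl hSr
    obtain ⟨T, hT, hTl, hTr, hle⟩ :=
      hf.exists_exchange hS (by simp [hSl]) (by simp [hSr]) hla hrb
    have := ih hT ((Multiset.cons_inj_right _).1 (hTl.symm.trans hSl))
      ((Multiset.cons_inj_right _).1 (hTr.symm.trans hSr))
    rw [sum_range_succ]
    linarith

/-- A tiling of the circle by the `p` arcs `[X t, X (t + 1)]`, lifted to `ℝ` and continued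
periodically. -/
def IsPeriodicTiling (p : ℕ) (X : ℕ → ℝ) : Prop :=
  Monotone X ∧ ∀ t, X (t + p) = X t + 2 * π

def arcSum (f : ℝ → ℝ → ℝ) (p : ℕ) (X : ℕ → ℝ) : ℝ :=
  ∑ i ∈ range p, f (X i) (X (i + 1))

namespace IsPeriodicTiling

variable {p : ℕ} {X : ℕ → ℝ}

theorem shift (hX : IsPeriodicTiling p X) (k : ℕ) : IsPeriodicTiling p (fun t => X (k + t)) :=
  ⟨fun _ _ h => hX.1 (by omega), fun t => by simpa only [add_assoc] using hX.2 (k + t)⟩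

theorem arcSum_shift (hX : IsPeriodicTiling p X)
    (hper : ∀ a b : ℝ, f (a + 2 * π) (b + 2 * π) = f a b) (k : ℕ) :
    arcSum f p (fun t => X (k + t)) = arcSum f p X :=
  Function.Periodic.sum_range_add (g := fun i => f (X i) (X (i + 1)))
    (fun i => by simp only [add_right_comm i p 1, hX.2, hper]) k

theorem isArc (hX : IsPeriodicTiling p X) (hp : 0 < p) (t : ℕ) : IsArc (X t, X (t + 1)) :=
  ⟨hX.1 (Nat.le_succ t), (hX.1 (by omega : t + 1 ≤ t + p)).trans_eq (hX.2 t)⟩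

theorem apply_add_mul (hX : IsPeriodicTiling p X) (t m : ℕ) : X (t + p * m) = X t + 2 * π * m := by
  induction m with
  | zero => simp
  | succ m ih => rw [Nat.mul_succ, ← add_assoc, hX.2, ih]; push_cast; ring

theorem exists_lt (hX : IsPeriodicTiling p X) (c : ℝ) : ∃ t, c < X t := by
  obtain ⟨m, hm⟩ := exists_nat_gt ((c - X 0) / (2 * π))
  refine ⟨0 + p * m, ?_⟩
  rw [hX.apply_add_mul]
  linarith [(div_lt_iff₀' (by positivity)).1 hm]

theorem exists_interleaved {q : ℕ} {Y : ℕ → ℝ} (hX : IsPeriodicTiling p X)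
    (hY : IsPeriodicTiling q Y) :
    ∃ k j, Y j ≤ X k ∧ X k ≤ Y (j + 1) ∧ Y (j + 1) ≤ X (k + 1) := by
  obtain ⟨k₀, hk₀⟩ := hX.exists_lt (Y 0)
  obtain ⟨j, -, hj, hj'⟩ := hY.1.exists_le_lt_succ hY.exists_lt hk₀.le
  obtain ⟨k, hk, hk', hk''⟩ := hX.1.exists_le_lt_succ hX.exists_lt hj'.le
  exact ⟨k, j, hj.trans (hX.1 hk), hk', hk''.le⟩

end IsPeriodicTiling

theorem QuadrangleIneq.exists_merge (hf : QuadrangleIneq f) {N p q : ℕ} (hp : 0 < p) (hq : 0 < q)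
    (hpq : p + q = 2 * N) {X Y : ℕ → ℝ} (hX : IsPeriodicTiling p X) (hY : IsPeriodicTiling q Y)
    (h₀ : X 0 ≤ Y 0) (h₁ : Y 0 ≤ X 1) (h₂ : Y (q - 1) ≤ X 0 + 2 * π) :
    ∃ z : ℕ → ℝ, Monotone z ∧ z (2 * N) = z 0 + 2 * π ∧ z (2 * N + 1) = z 1 + 2 * π ∧
      arcSum f p X + arcSum f q Y ≤ ∑ t ∈ range (2 * N), f (z t) (z (t + 2)) := by
  obtain ⟨p, rfl⟩ : ∃ p', p = p' + 1 := ⟨p - 1, by omega⟩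
  obtain ⟨q, rfl⟩ : ∃ q', q = q' + 1 := ⟨q - 1, by omega⟩
  set R : Multiset ℝ :=
    (Multiset.range p).map (fun i => X (i + 1)) + (Multiset.range q).map (fun j => Y (j + 1))
  have hR : ∀ v ∈ R, Y 0 ≤ v ∧ v ≤ X 0 + 2 * π := by
    simp only [R, Multiset.mem_add, Multiset.mem_map, Multiset.mem_range]
    rintro _ (⟨i, hi, rfl⟩ | ⟨j, hj, rfl⟩)
    · exact ⟨h₁.trans (hX.1 (by omega)), (hX.1 (by omega)).trans_eq (hX.2 0)⟩
    · exact ⟨hY.1 (by omega), (hY.1 (by omega)).trans h₂⟩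
  set V := R.sort (· ≤ ·)
  set W := V ++ [X 0 + 2 * π, Y 0 + 2 * π]
  -- the default value `Y 0 + 2π` keeps `z` monotone beyond the end of the list
  set z : ℕ → ℝ := fun t => (X 0 :: Y 0 :: W).getD t (Y 0 + 2 * π)
  have hV : V.length + 2 = 2 * N := by simp [V, R]; omega
  have hVR (v) (hv : v ∈ V) : Y 0 ≤ v ∧ v ≤ X 0 + 2 * π := hR v ((Multiset.mem_sort _).1 hv)
  have hYX : Y 0 ≤ X 0 + 2 * π := h₁.trans ((hX.1 (by omega)).trans_eq (hX.2 0))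
  have hz : Monotone z := by
    have := Real.pi_pos
    refine List.Pairwise.monotone_getD ?_ ?_
    · simp only [W, List.pairwise_cons, List.pairwise_append, List.mem_append, List.mem_cons,
        List.not_mem_nil, or_false]
      refine ⟨?_, ?_, Multiset.pairwise_sort _ _, ⟨?_, by simp, .nil⟩, ?_⟩
      · rintro _ (rfl | hv | rfl | rfl)
        exacts [h₀, h₀.trans (hVR _ hv).1, by linarith, by linarith]
      · rintro _ (hv | rfl | rfl)
        exacts [(hVR _ hv).1, hYX, by linarith]
      · rintro _ rfl; linarith
      · rintro a hv _ (rfl | rfl) <;> linarith [hVR _ hv]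
    · simp only [W, List.mem_cons, List.mem_append, List.not_mem_nil, or_false]
      rintro _ (rfl | rfl | hv | rfl | rfl)
      exacts [by linarith, by linarith, by linarith [hVR _ hv], by linarith, le_rfl]
  have hfst : (Multiset.range (2 * N)).map z = X 0 ::ₘ Y 0 ::ₘ R := by
    rw [← hV, ← Multiset.coe_range, Multiset.map_coe, List.map_getD_range (by simp [W])]
    simp [W, V, ← Multiset.cons_coe]
  have hsnd : (Multiset.range (2 * N)).map (fun t => z (t + 2)) =
      (X 0 + 2 * π) ::ₘ (Y 0 + 2 * π) ::ₘ R := by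
    rw [← hV, ← Multiset.coe_range, Multiset.map_coe]
    change (((List.range _).map fun t => W.getD t (Y 0 + 2 * π) : List ℝ) : Multiset ℝ) = _
    rw [List.map_getD_range (by simp [W]), List.take_of_length_le (by simp [W]),
      Multiset.coe_eq_coe.2 List.perm_append_comm]
    simp [V, ← Multiset.cons_coe]
  set S : Multiset (ℝ × ℝ) := (Multiset.range (p + 1)).map (fun i => (X i, X (i + 1))) +
    (Multiset.range (q + 1)).map (fun j => (Y j, Y (j + 1)))
  have hS : ∀ s ∈ S, IsArc s := by
    simp only [S, Multiset.mem_add, Multiset.mem_map]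
    rintro _ (⟨i, -, rfl⟩ | ⟨j, -, rfl⟩)
    exacts [hX.isArc hp i, hY.isArc hq j]
  have hSl : S.map Prod.fst = (Multiset.range (2 * N)).map z := by
    simp only [hfst, S, R, Multiset.map_add, Multiset.map_map, Function.comp_def,
      Multiset.map_range_succ', Multiset.map_cons, Multiset.cons_add, Multiset.add_cons]
    exact Multiset.cons_swap _ _ _
  have hSr : S.map Prod.snd = (Multiset.range (2 * N)).map (fun t => z (t + 2)) := by
    have hXp : X (p + 1) = X 0 + 2 * π := by simpa using hX.2 0
    have hYq : Y (q + 1) = Y 0 + 2 * π := by simpa using hY.2 0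
    simp only [hsnd, S, R, Multiset.map_add, Multiset.map_map, Function.comp_def,
      Multiset.range_succ, Multiset.map_cons, Multiset.cons_add, Multiset.add_cons, hXp, hYq]
    exact Multiset.cons_swap _ _ _
  have hSsum : (S.map fun s => f s.1 s.2).sum = arcSum f (p + 1) X + arcSum f (q + 1) Y := by
    simp only [S, arcSum, Finset.sum_eq_multiset_sum, Finset.range_val, Multiset.map_add,
      Multiset.sum_add, Multiset.map_map, Function.comp_def]
  refine ⟨z, hz, ?_, ?_, ?_⟩
  · rw [← hV]; simp [z, W]
  · rw [← hV]; simp [z, W]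
  · rw [← hSsum]
    exact hf.sum_le_sum_range hz (hz.comp (fun _ _ h => by omega)) (2 * N) hS hSl hSr

def tilingSums (f : ℝ → ℝ → ℝ) (n : ℕ) : Set ℝ :=
  {s | ∃ x : Fin (n + 1) → ℝ, Monotone x ∧ x (Fin.last n) = x 0 + 2 * Real.pi ∧
    s = ∑ i : Fin n, f (x i.castSucc) (x i.succ)}

theorem Mseq_eq_sSup (f : ℝ → ℝ → ℝ) (n : ℕ) : Mseq f n = sSup (tilingSums f n) := rfl

theorem bddAbove_tilingSums
    (hbdd : ∃ B : ℝ, ∀ a b : ℝ, a ≤ b → b ≤ a + 2 * π → |f a b| ≤ B) (n : ℕ) :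
    BddAbove (tilingSums f n) := by
  obtain ⟨B, hB⟩ := hbdd
  refine ⟨n * B, ?_⟩
  rintro _ ⟨x, hx, hxn, rfl⟩
  have harc (i : Fin n) : f (x i.castSucc) (x i.succ) ≤ B := by
    refine (abs_le.1 (hB _ _ (hx (Fin.castSucc_le_succ i)) ?_)).2
    linarith [hx (Fin.le_last i.succ), hx (Fin.zero_le i.castSucc)]
  calc ∑ i : Fin n, f (x i.castSucc) (x i.succ) ≤ ∑ _i : Fin n, B := sum_le_sum fun i _ => harc i
    _ = n * B := by simp

theorem arcSum_mem_tilingSums {N : ℕ} {a : ℕ → ℝ} (ha : Monotone a) (haN : a N = a 0 + 2 * π) :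
    arcSum f N a ∈ tilingSums f N :=
  ⟨fun i => a i, fun _ _ h => ha h, haN,
    (Fin.sum_univ_eq_sum_range (fun i => f (a i) (a (i + 1))) N).symm⟩

theorem tilingSums_nonempty {n : ℕ} (hn : 0 < n) : (tilingSums f n).Nonempty :=
  ⟨_, arcSum_mem_tilingSums (a := fun t => 2 * π * t / n)
    (fun _ _ h => by dsimp only; gcongr) (by field_simp; simp)⟩

noncomputable def periodize (p : ℕ) (x : ℕ → ℝ) (t : ℕ) : ℝ :=
  x (t % p) + 2 * π * (t / p : ℕ)

section periodize

variable {p : ℕ} {x : ℕ → ℝ}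

theorem periodize_add_mul (hp : 0 < p) (t m : ℕ) :
    periodize p x (t + p * m) = periodize p x t + 2 * π * m := by
  simp only [periodize, Nat.add_mul_mod_self_left, Nat.add_mul_div_left _ _ hp]
  push_cast; ring

theorem periodize_of_le (hp : 0 < p) (hx : x p = x 0 + 2 * π) {t : ℕ} (ht : t ≤ p) :
    periodize p x t = x t := by
  rcases ht.lt_or_eq with ht | rfl
  · simp [periodize, Nat.mod_eq_of_lt ht, Nat.div_eq_of_lt ht]
  · simp [periodize, Nat.div_self hp, hx]

theorem isPeriodicTiling_periodize (hp : 0 < p) (hmono : ∀ t < p, x t ≤ x (t + 1))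
    (hx : x p = x 0 + 2 * π) : IsPeriodicTiling p (periodize p x) := by
  refine ⟨monotone_nat_of_le_succ fun t => ?_, fun t => by simpa using periodize_add_mul hp t 1⟩
  have ht := Nat.mod_add_div t p
  have hr := Nat.mod_lt t hp
  rw [← ht, add_right_comm, periodize_add_mul hp, periodize_add_mul hp,
    periodize_of_le hp hx hr.le, periodize_of_le hp hx hr]
  exact add_le_add_left (hmono _ hr) _

end periodize

theorem exists_isPeriodicTiling {p : ℕ} (hp : 0 < p) {x : Fin (p + 1) → ℝ} (hx : Monotone x)
    (hxp : x (Fin.last p) = x 0 + 2 * π) :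
    ∃ X, IsPeriodicTiling p X ∧ ∑ i : Fin p, f (x i.castSucc) (x i.succ) = arcSum f p X := by
  set x' : ℕ → ℝ := fun t => x ⟨min t p, by omega⟩
  have hx' (i : Fin (p + 1)) : x' i = x i := by simp [x', i.is_le]
  have hxp' : x' p = x' 0 + 2 * π := by simpa [x', Fin.last] using hxp
  refine ⟨periodize p x', isPeriodicTiling_periodize hp (fun t _ => hx (by simp)) hxp', ?_⟩
  rw [arcSum, ← Fin.sum_univ_eq_sum_range]
  refine sum_congr rfl fun i _ => ?_
  rw [periodize_of_le hp hxp' i.isLt.le, periodize_of_le hp hxp' i.isLt, ← hx', ← hx']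
  rfl

theorem arcSum_le_Mseq (hbdd : ∃ B : ℝ, ∀ a b : ℝ, a ≤ b → b ≤ a + 2 * π → |f a b| ≤ B)
    {N : ℕ} {a : ℕ → ℝ} (ha : Monotone a) (haN : a N = a 0 + 2 * π) : arcSum f N a ≤ Mseq f N :=
  le_csSup (bddAbove_tilingSums hbdd N) (arcSum_mem_tilingSums ha haN)

theorem sum_range_two_mul_le_two_mul_Mseq
    (hbdd : ∃ B : ℝ, ∀ a b : ℝ, a ≤ b → b ≤ a + 2 * π → |f a b| ≤ B) {N : ℕ} {z : ℕ → ℝ}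
    (hz : Monotone z) (h₀ : z (2 * N) = z 0 + 2 * π) (h₁ : z (2 * N + 1) = z 1 + 2 * π) :
    ∑ t ∈ range (2 * N), f (z t) (z (t + 2)) ≤ 2 * Mseq f N := by
  rw [sum_range_two_mul, two_mul]
  exact add_le_add
    (arcSum_le_Mseq hbdd (a := fun i => z (2 * i)) (hz.comp fun _ _ h => by omega) h₀)
    (arcSum_le_Mseq hbdd (a := fun i => z (2 * i + 1)) (hz.comp fun _ _ h => by omega) h₁)

theorem arcSum_add_arcSum_le_two_mul_Mseq
    (hbdd : ∃ B : ℝ, ∀ a b : ℝ, a ≤ b → b ≤ a + 2 * π → |f a b| ≤ B)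
    (hper : ∀ a b : ℝ, f (a + 2 * π) (b + 2 * π) = f a b) (hf : QuadrangleIneq f)
    {N p q : ℕ} (hp : 0 < p) (hq : 0 < q) (hpq : p + q = 2 * N) {X Y : ℕ → ℝ}
    (hX : IsPeriodicTiling p X) (hY : IsPeriodicTiling q Y) :
    arcSum f p X + arcSum f q Y ≤ 2 * Mseq f N := by
  obtain ⟨k, j, hjk, hkj, hjk'⟩ := hX.exists_interleaved hY
  rw [← hX.arcSum_shift hper k, ← hY.arcSum_shift hper (j + 1)]
  have hYq : Y (j + 1 + (q - 1)) = Y j + 2 * π := by rw [← hY.2]; congr 1; omega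
  obtain ⟨z, hz, h₀, h₁, hle⟩ := hf.exists_merge hp hq hpq (hX.shift k) (hY.shift (j + 1))
    (by simpa using hkj) (by simpa using hjk') (by simpa [hYq] using hjk)
  exact hle.trans (sum_range_two_mul_le_two_mul_Mseq hbdd hz h₀ h₁)

theorem stmt0_general (f : ℝ → ℝ → ℝ)
    (hbdd : ∃ B : ℝ, ∀ a b : ℝ, a ≤ b → b ≤ a + 2 * Real.pi → |f a b| ≤ B)
    (hper : ∀ a b : ℝ, f (a + 2 * Real.pi) (b + 2 * Real.pi) = f a b)
    (hineq : ∀ a b c d : ℝ, a ≤ b → b ≤ c → c ≤ d → d ≤ a + 2 * Real.pi →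
      f a d + f b c ≤ f a c + f b d)
    (n : ℕ) (hn : 4 ≤ n) :
    Mseq f (n - 1) + Mseq f (n + 1) ≤ 2 * Mseq f n := by
  have key : ∀ a ∈ tilingSums f (n - 1), ∀ b ∈ tilingSums f (n + 1), a + b ≤ 2 * Mseq f n := by
    rintro _ ⟨x, hx, hxl, rfl⟩ _ ⟨y, hy, hyl, rfl⟩
    obtain ⟨X, hX, hXsum⟩ := exists_isPeriodicTiling (f := f) (by omega) hx hxl
    obtain ⟨Y, hY, hYsum⟩ := exists_isPeriodicTiling (f := f) (by omega) hy hyl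
    rw [hXsum, hYsum]
    exact arcSum_add_arcSum_le_two_mul_Mseq hbdd hper hineq (by omega) (by omega) (by omega) hX hY
  rw [Mseq_eq_sSup, Mseq_eq_sSup f (n + 1), ← le_sub_iff_add_le]
  refine csSup_le (tilingSums_nonempty (by omega)) fun a ha => le_sub_comm.1 ?_
  exact csSup_le (tilingSums_nonempty (by omega)) fun b hb => le_sub_iff_add_le'.2 (key a ha b hb)

theorem stmt0 (f : ℝ → ℝ → ℝ)
    (hbdd : ∃ B : ℝ, ∀ a b : ℝ, a ≤ b → b ≤ a + 2 * Real.pi → |f a b| ≤ B)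
    (hdeg : ∀ a : ℝ, f a a = 0)
    (hper : ∀ a b : ℝ, f (a + 2 * Real.pi) (b + 2 * Real.pi) = f a b)
    (hineq : ∀ a b c d : ℝ, a ≤ b → b ≤ c → c ≤ d → d ≤ a + 2 * Real.pi →
      f a d + f b c ≤ f a c + f b d)
    (n : ℕ) (hn : 4 ≤ n) :
    Mseq f (n - 1) + Mseq f (n + 1) ≤ 2 * Mseq f n :=
  stmt0_general f hbdd hper hineq n hn
end

section
/- Let C be an o-symmetric convex disk in ℝ². A closed set K ⊊ ℝ² is C-convex if and only if K is an intersection of translates of C. -/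
open Set

noncomputable section

/-- The plane. -/
abbrev P2 := ℝ × ℝ

/-- The translate of `C` by the vector `x`. -/
def tr (C : Set P2) (x : P2) : Set P2 := (x + ·) '' C

/-- The `C`-spindle of `p` and `q`: the intersection of all translates of `C` containing both
`p` and `q` (equal to all of `ℝ²` if there is no such translate). -/
def spindle (C : Set P2) (p q : P2) : Set P2 :=
  ⋂ x ∈ {x : P2 | p ∈ tr C x ∧ q ∈ tr C x}, tr C x

/-- `K` is `C`-(spindle) convex. -/
def CConvexSet (C K : Set P2) : Prop := ∀ p ∈ K, ∀ q ∈ K, spindle C p q ⊆ K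

/-- `C` is an `o`-symmetric convex disk: compact, convex, with nonempty interior,
symmetric about the origin. -/
def SymDisk (C : Set P2) : Prop :=
  IsCompact C ∧ Convex ℝ C ∧ (interior C).Nonempty ∧ ∀ x ∈ C, -x ∈ C

/-- A convex body (convex disk) in the plane. -/
def ConvBody (K : Set P2) : Prop := IsCompact K ∧ Convex ℝ K ∧ (interior K).Nonempty

/-- Cross product (orientation determinant) of two plane vectors. -/
def detv (a b : P2) : ℝ := a.1 * b.2 - a.2 * b.1

/-- A (cyclic) list of points is in (weak) counterclockwise convex position order. -/
def InConvexOrder {m : ℕ} (v : Fin m → P2) : Prop :=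
  ∀ i j k : Fin m, i < j → j < k → 0 ≤ detv (v j - v i) (v k - v i)

/-- The `C`-perimeter of a set `K`: the supremum of the `C`-perimeters of convex polygons
inscribed in `K`, a polygon being given by a closed cyclic sequence of vertices in
counterclockwise convex position, with side lengths measured by the gauge (Minkowski
functional) of `C`. -/
def CPerim (C K : Set P2) : ℝ :=
  sSup {s | ∃ m : ℕ, ∃ v : Fin (m + 1) → P2, (∀ i, v i ∈ K) ∧ InConvexOrder v ∧
    v (Fin.last m) = v 0 ∧ s = ∑ i : Fin m, gauge C (v i.succ - v i.castSucc)}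

/-- The `C`-length of a curve `γ : [0,1] → ℝ²`: supremum of inscribed polygonal
`‖·‖_C`-lengths. -/
def CLength (C : Set P2) (γ : ℝ → P2) : ℝ :=
  sSup {s | ∃ n : ℕ, ∃ t : Fin (n + 1) → ℝ, Monotone t ∧ t 0 = 0 ∧ t (Fin.last n) = 1 ∧
    s = ∑ i : Fin n, gauge C (γ (t i.succ) - γ (t i.castSucc))}

/-- The set of `C`-lengths of arcs joining `x` and `y` contained in the boundary of some
translate of `C`. -/
def arcSet (C : Set P2) (x y : P2) : Set ℝ :=
  {s | ∃ z : P2, ∃ γ : ℝ → P2, ContinuousOn γ (Icc 0 1) ∧ γ 0 = x ∧ γ 1 = y ∧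
    γ '' Icc 0 1 ⊆ frontier (tr C z) ∧ s = CLength C γ}

/-- The `C`-arc-distance of `x` and `y`. -/
def arcDist (C : Set P2) (x y : P2) : ℝ := sInf (arcSet C x y)

/-- The `C`-convex hull of `X`: the intersection of all translates of `C` containing `X`. -/
def convC (C X : Set P2) : Set P2 := ⋂ x ∈ {x : P2 | X ⊆ tr C x}, tr C x

/-- `Q` is a `C`-`n`-gon: an intersection of `n` translates of `C`. -/
def Cngon (C : Set P2) (n : ℕ) (Q : Set P2) : Prop :=
  ∃ x : Fin n → P2, Q = ⋂ i, tr C (x i)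

/-- `K` is an intersection of translates of `C`. -/
def IsCIntersection (C K : Set P2) : Prop := ∃ T : Set P2, K = ⋂ x ∈ T, tr C x

/-- `â_n^C(K)`: the supremum of the areas of `C`-`n`-gons inscribed in `K`. -/
def ahat (C : Set P2) (n : ℕ) (K : Set P2) : ℝ :=
  sSup {s | ∃ Q : Set P2, Cngon C n Q ∧ Q ⊆ K ∧ s = (MeasureTheory.volume Q).toReal}

/-- `Â_n^C(K)`: the infimum of the areas of `C`-`n`-gons circumscribed about `K`. -/
def Ahat (C : Set P2) (n : ℕ) (K : Set P2) : ℝ :=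
  sInf {s | ∃ Q : Set P2, Cngon C n Q ∧ K ⊆ Q ∧ s = (MeasureTheory.volume Q).toReal}

/-- `p̂_n^C(K)`: the supremum of the `C`-perimeters of `C`-`n`-gons inscribed in `K`. -/
def phat (C : Set P2) (n : ℕ) (K : Set P2) : ℝ :=
  sSup {s | ∃ Q : Set P2, Cngon C n Q ∧ Q ⊆ K ∧ s = CPerim C Q}

/-- `P̂_n^C(K)`: the infimum of the `C`-perimeters of `C`-`n`-gons circumscribed about `K`. -/
def Phat (C : Set P2) (n : ℕ) (K : Set P2) : ℝ :=
  sInf {s | ∃ Q : Set P2, Cngon C n Q ∧ K ⊆ Q ∧ s = CPerim C Q}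

end

/-!
Spindle convexity of a proper set `K` puts any two of its points into a common translate of `C`,
so `K` is convex and bounded. Given `y ∉ K`, separate `y` from `K` by a functional `f`: a
translate `x + C ⊇ K` with `f x = max_K f - max_C f` misses `y`. Since `C = -C`, the centres of
the translates containing `p` form `p + C`, so by Helly's theorem on the line
`f = max_K f - max_C f` it suffices to treat two points `p, r ∈ K`. Let `e` maximise `f` on the
lens `(p + C) ∩ (r + C)`. Splitting `f` along the normal cones of the two discs at `e`, a planar
lemma (the spindle of two boundary points of `C` contains the boundary arc between them) puts a
point with `f = f e - max_C f` into `[p, r]_C ⊆ K`, so `f e ≥ max_K f - max_C f`; the same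
argument for `-f` gives a centre on the other side of the line, and the lens is convex. Pairs
whose lens has empty interior are limits of pairs whose lens has interior points.
-/

section Translates

variable {C : Set P2}

lemma mem_tr {x z : P2} : z ∈ tr C x ↔ z - x ∈ C := by
  constructor
  · rintro ⟨c, hc, rfl⟩
    simpa using hc
  · exact fun h => ⟨z - x, h, add_sub_cancel x z⟩

lemma mem_tr_comm (hCs : ∀ x ∈ C, -x ∈ C) {x z : P2} : z ∈ tr C x ↔ x ∈ tr C z := by
  rw [mem_tr, mem_tr]
  exact ⟨fun h => by simpa using hCs _ h, fun h => by simpa using hCs _ h⟩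

lemma convex_tr (hCv : Convex ℝ C) (x : P2) : Convex ℝ (tr C x) := hCv.translate x

lemma isCompact_tr (hCc : IsCompact C) (x : P2) : IsCompact (tr C x) :=
  hCc.image (continuous_const_add x)

lemma interior_tr (x : P2) : interior (tr C x) = tr (interior C) x :=
  ((Homeomorph.addLeft x).image_interior C).symm

lemma isMaxOn_sub_of_isMaxOn_tr {φ : P2 →L[ℝ] ℝ} {x e : P2} (h : IsMaxOn φ (tr C x) e) :
    IsMaxOn φ C (e - x) := fun c hc => by
  have : φ (x + c) ≤ φ e := h ⟨c, hc, rfl⟩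
  show φ c ≤ φ (e - x)
  rw [map_add] at this
  rw [map_sub]
  linarith

lemma mem_spindle_iff (hCs : ∀ x ∈ C, -x ∈ C) {p q z : P2} :
    z ∈ spindle C p q ↔ tr C p ∩ tr C q ⊆ tr C z := by
  simp only [spindle, mem_iInter₂, mem_ofPred_eq, subset_def, mem_inter_iff, and_imp,
    mem_tr_comm hCs (z := p), mem_tr_comm hCs (z := q), mem_tr_comm hCs (z := z)]

lemma exists_mem_tr_of_spindle_ne_univ {p q : P2} (h : spindle C p q ≠ univ) :
    ∃ x, p ∈ tr C x ∧ q ∈ tr C x := by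
  by_contra! h'
  exact h (eq_univ_of_forall fun z => mem_iInter₂.2 fun x hx => absurd hx.2 (h' x hx.1))

end Translates

section ConvexAnalysis

variable {E : Type*} [NormedAddCommGroup E] [NormedSpace ℝ E]

lemma zero_mem_interior_of_neg_mem {C : Set E} (hCv : Convex ℝ C) (hCi : (interior C).Nonempty)
    (hCs : ∀ x ∈ C, -x ∈ C) : (0 : E) ∈ interior C := by
  obtain ⟨x, hx⟩ := hCi
  have hneg : -x ∈ interior C := by
    have hC : Neg.neg '' C = C :=
      Subset.antisymm (image_subset_iff.2 hCs) fun z hz => ⟨-z, hCs z hz, neg_neg z⟩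
    have := (Homeomorph.neg E).image_interior C
    rw [show ⇑(Homeomorph.neg E) = Neg.neg from rfl, hC] at this
    exact this ▸ mem_image_of_mem _ hx
  simpa using hCv.interior hx hneg (by norm_num : (0 : ℝ) ≤ 1 / 2)
    (by norm_num : (0 : ℝ) ≤ 1 / 2) (by norm_num)

/-- The sum rule for normal cones, under Slater's condition `(interior A ∩ B).Nonempty`. -/
theorem exists_add_eq_isMaxOn_of_isMaxOn_inter {A B : Set E} (hA : Convex ℝ A)
    (hB : Convex ℝ B) (hAB : (interior A ∩ B).Nonempty) {u : E →L[ℝ] ℝ} {e : E} (heA : e ∈ A)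
    (heB : e ∈ B) (he : IsMaxOn u (A ∩ B) e) :
    ∃ φ₁ φ₂ : E →L[ℝ] ℝ, φ₁ + φ₂ = u ∧ IsMaxOn φ₁ A e ∧ IsMaxOn φ₂ B e := by
  -- separate `{(x, α) | x ∈ interior A, α < u x - u e}` from `B × [0, ∞)` in `E × ℝ`
  set L : E × ℝ →L[ℝ] ℝ :=
    ContinuousLinearMap.snd ℝ E ℝ - u.comp (ContinuousLinearMap.fst ℝ E ℝ)
  set S₁ : Set (E × ℝ) := interior A ×ˢ univ ∩ L ⁻¹' Iio (-u e)
  have hS₁ : IsOpen S₁ :=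
    (isOpen_interior.prod isOpen_univ).inter (isOpen_Iio.preimage L.continuous)
  have hS₁c : Convex ℝ S₁ :=
    (hA.interior.prod convex_univ).inter ((convex_Iio _).linear_preimage L.toLinearMap)
  have hmemS₁ : ∀ x ∈ interior A, ∀ α < u x - u e, (x, α) ∈ S₁ := fun x hx α hα =>
    ⟨⟨hx, trivial⟩, show α - u x < -u e by linarith⟩
  have hdisj : Disjoint S₁ (B ×ˢ Ici 0) := by
    rw [Set.disjoint_left]
    rintro ⟨x, α⟩ ⟨⟨hxA, -⟩, hα⟩ ⟨hxB, hα'⟩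
    have : u x ≤ u e := he ⟨interior_subset hxA, hxB⟩
    have : α - u x < -u e := hα
    exact absurd (mem_Ici.1 hα') (by linarith)
  obtain ⟨Λ, s, hΛ₁, hΛ₂⟩ := geometric_hahn_banach_open hS₁c hS₁ (hB.prod (convex_Ici 0)) hdisj
  set g : E →L[ℝ] ℝ := Λ.comp (ContinuousLinearMap.inl ℝ E ℝ)
  set l : ℝ := Λ (0, 1)
  have hΛ : ∀ x α, Λ (x, α) = g x + l * α := fun x α => by
    rw [show ((x, α) : E × ℝ) = (x, 0) + α • ((0 : E), (1 : ℝ)) by simp, map_add, map_smul,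
      smul_eq_mul, mul_comm]
    rfl
  have hB' : ∀ y ∈ B, s ≤ g y := fun y hy => by
    simpa [hΛ] using hΛ₂ (y, 0) ⟨hy, mem_Ici.2 le_rfl⟩
  obtain ⟨z, hzA, hzB⟩ := hAB
  have hl : 0 < l := by
    have h₁ := hΛ₁ _ (hmemS₁ z hzA (u z - u e - 1) (by linarith))
    have : u z ≤ u e := he ⟨interior_subset hzA, hzB⟩
    rw [hΛ] at h₁
    nlinarith [hB' z hzB]
  have hinterior : ∀ x ∈ interior A, g x + l * (u x - u e) ≤ s := fun x hx =>
    le_of_forall_pos_lt_add fun δ hδ => by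
      have := hΛ₁ _ (hmemS₁ x hx (u x - u e - δ / l) (by linarith [div_pos hδ hl]))
      rw [hΛ, mul_sub, mul_div_cancel₀ _ hl.ne'] at this
      linarith
  have hA' : ∀ x ∈ A, g x + l * (u x - u e) ≤ s := by
    have hclosed : IsClosed {x | g x + l * (u x - u e) ≤ s} :=
      isClosed_le (by fun_prop) continuous_const
    intro x hx
    refine closure_minimal hinterior hclosed ?_
    rw [hA.closure_interior_eq_closure_of_nonempty_interior ⟨z, hzA⟩]
    exact subset_closure hx
  have hge : g e = s := le_antisymm (by simpa using hA' e heA) (hB' e heB)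
  refine ⟨u + l⁻¹ • g, -(l⁻¹ • g), add_neg_cancel_right _ _, fun x hx => ?_, fun y hy => ?_⟩
  · show u x + l⁻¹ * g x ≤ u e + l⁻¹ * g e
    have : l * (u x + l⁻¹ * g x) ≤ l * (u e + l⁻¹ * g e) := by
      rw [mul_add, mul_add, mul_inv_cancel_left₀ hl.ne', mul_inv_cancel_left₀ hl.ne']
      linarith [hA' x hx]
    exact le_of_mul_le_mul_left this hl
  · show -(l⁻¹ * g y) ≤ -(l⁻¹ * g e)
    exact neg_le_neg (mul_le_mul_of_nonneg_left (hge ▸ hB' y hy) (inv_nonneg.2 hl.le))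

end ConvexAnalysis

section PlaneFunctionals

def dualDet (u v : P2 →L[ℝ] ℝ) : ℝ := u (1, 0) * v (0, 1) - u (0, 1) * v (1, 0)

lemma clm_ext_P2 {g h : P2 →L[ℝ] ℝ} (h₁ : g (1, 0) = h (1, 0)) (h₂ : g (0, 1) = h (0, 1)) :
    g = h :=
  ContinuousLinearMap.prod_ext (ContinuousLinearMap.ext_ring h₁) (ContinuousLinearMap.ext_ring h₂)

lemma exists_eq_smul_add_smul_of_dualDet_ne_zero {u v : P2 →L[ℝ] ℝ} (h : dualDet u v ≠ 0)
    (ω : P2 →L[ℝ] ℝ) : ∃ s t : ℝ, ω = s • u + t • v := by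
  refine ⟨(ω (1, 0) * v (0, 1) - ω (0, 1) * v (1, 0)) / dualDet u v,
    (u (1, 0) * ω (0, 1) - u (0, 1) * ω (1, 0)) / dualDet u v, clm_ext_P2 ?_ ?_⟩ <;>
  · simp only [add_apply, smul_apply, smul_eq_mul]
    rw [div_mul_eq_mul_div, div_mul_eq_mul_div, ← add_div, eq_div_iff h, dualDet]
    ring

lemma eq_zero_or_exists_eq_smul_of_dualDet_eq_zero {u v : P2 →L[ℝ] ℝ} (h : dualDet u v = 0) :
    u = 0 ∨ ∃ c : ℝ, v = c • u := by
  unfold dualDet at h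
  by_cases h₁ : u (1, 0) = 0
  · by_cases h₂ : u (0, 1) = 0
    · exact .inl (clm_ext_P2 (by simpa using h₁) (by simpa using h₂))
    · have hv : v (1, 0) = 0 := by
        rw [h₁, zero_mul, zero_sub, neg_eq_zero] at h
        exact (mul_eq_zero.1 h).resolve_left h₂
      refine .inr ⟨v (0, 1) / u (0, 1), clm_ext_P2 ?_ ?_⟩ <;>
        simp only [smul_apply, smul_eq_mul, h₁, hv, mul_zero]
      field_simp
  · refine .inr ⟨v (1, 0) / u (1, 0), clm_ext_P2 ?_ ?_⟩ <;> simp only [smul_apply, smul_eq_mul]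
    · field_simp
    · field_simp
      linear_combination h

end PlaneFunctionals

section SymmetricDisk

variable {C : Set P2}

/- Separate `z - f` from `C` by `ω = s • φ₁ + t • φ₂`. Depending on the signs of `s` and `t`,
one of `z - b`, `z - a`, `-f` or a suitable point of the segment `[a, b]` is a point of `C` at
which `ω` is at least `ω (z - f)`. -/
lemma inter_tr_subset_tr_of_isMaxOn (hCcl : IsClosed C) (hCv : Convex ℝ C)
    (hCs : ∀ x ∈ C, -x ∈ C) {φ₁ φ₂ : P2 →L[ℝ] ℝ} (hφ : dualDet φ₁ φ₂ ≠ 0) {a b f : P2}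
    (ha : a ∈ C) (hb : b ∈ C) (hf : f ∈ C) (ha' : IsMaxOn φ₁ C a) (hb' : IsMaxOn φ₂ C b)
    (hf' : IsMaxOn (φ₁ + φ₂) C f) : tr C a ∩ tr C b ⊆ tr C f := by
  rintro z ⟨hza, hzb⟩
  rw [mem_tr] at hza hzb ⊢
  by_contra hzf
  obtain ⟨ω, r, hωC, hωz⟩ := geometric_hahn_banach_closed_point hCv hCcl hzf
  suffices ∃ c ∈ C, ω (z - f) ≤ ω c by
    obtain ⟨c, hc, hle⟩ := this
    linarith [hωC c hc]
  have hfa : φ₁ f ≤ φ₁ a := ha' hf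
  have hfb : φ₂ f ≤ φ₂ b := hb' hf
  have hua : φ₁ a + φ₂ a ≤ φ₁ f + φ₂ f := hf' ha
  have hub : φ₁ b + φ₂ b ≤ φ₁ f + φ₂ f := hf' hb
  have hz₁ : φ₁ (z - b) ≤ φ₁ a := ha' hzb
  have hz₂ : φ₂ (z - a) ≤ φ₂ b := hb' hza
  have hz₁' : φ₁ (-(z - a)) ≤ φ₁ a := ha' (hCs _ hza)
  have hz₂' : φ₂ (-(z - b)) ≤ φ₂ b := hb' (hCs _ hzb)
  simp only [map_sub, map_neg] at hz₁ hz₂ hz₁' hz₂'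
  obtain ⟨s, t, rfl⟩ := exists_eq_smul_add_smul_of_dualDet_ne_zero hφ ω
  rcases le_or_gt 0 s with hs | hs <;> rcases le_or_gt 0 t with ht | ht
  · have hmem : φ₁ a + φ₁ b - φ₁ f ∈ φ₁ '' segment ℝ a b := by
      rw [show (φ₁ : P2 → ℝ) = φ₁.toLinearMap.toAffineMap from rfl, image_segment,
        segment_symm, segment_eq_Icc (ha' hb)]
      exact (show φ₁ a + φ₁ b - φ₁ f ∈ Icc (φ₁ b) (φ₁ a) from ⟨by linarith, by linarith⟩)
    obtain ⟨_, ⟨α, β, hα, hβ, hαβ, rfl⟩, hc⟩ := hmem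
    refine ⟨α • a + β • b, hCv ha hb hα hβ hαβ, ?_⟩
    simp only [map_add, map_smul, smul_eq_mul] at hc
    have h₂ : φ₂ z - φ₂ f ≤ α * φ₂ a + β * φ₂ b := by
      nlinarith [mul_le_mul_of_nonneg_left hua hβ, mul_le_mul_of_nonneg_left hub hα]
    simp only [add_apply, smul_apply, smul_eq_mul, map_add, map_sub, map_smul]
    nlinarith [mul_le_mul_of_nonneg_left h₂ ht]
  · refine ⟨z - b, hzb, ?_⟩
    simp only [add_apply, smul_apply, smul_eq_mul, map_sub]
    nlinarith
  · refine ⟨z - a, hza, ?_⟩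
    simp only [add_apply, smul_apply, smul_eq_mul, map_sub]
    nlinarith
  · refine ⟨-f, hCs f hf, ?_⟩
    simp only [add_apply, smul_apply, smul_eq_mul, map_sub, map_neg]
    nlinarith

lemma exists_isMaxOn_add_inter_tr_subset (hCc : IsCompact C) (hCv : Convex ℝ C)
    (hCs : ∀ x ∈ C, -x ∈ C) {φ₁ φ₂ : P2 →L[ℝ] ℝ} {a b : P2} (ha : a ∈ C) (hb : b ∈ C)
    (ha' : IsMaxOn φ₁ C a) (hb' : IsMaxOn φ₂ C b) :
    ∃ f ∈ C, IsMaxOn (φ₁ + φ₂) C f ∧ tr C a ∩ tr C b ⊆ tr C f := by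
  by_cases hφ : dualDet φ₁ φ₂ = 0
  · rcases eq_zero_or_exists_eq_smul_of_dualDet_eq_zero hφ with rfl | ⟨c, rfl⟩
    · exact ⟨b, hb, by simpa using hb', inter_subset_right⟩
    rcases le_or_gt 0 (1 + c) with hc | hc
    · refine ⟨a, ha, fun y hy => ?_, inter_subset_left⟩
      have : φ₁ y ≤ φ₁ a := ha' hy
      show φ₁ y + c * φ₁ y ≤ φ₁ a + c * φ₁ a
      nlinarith
    · refine ⟨b, hb, fun y hy => ?_, inter_subset_right⟩
      have : c * φ₁ y ≤ c * φ₁ b := hb' hy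
      show φ₁ y + c * φ₁ y ≤ φ₁ b + c * φ₁ b
      nlinarith
  · obtain ⟨f, hf, hfmax⟩ := hCc.exists_isMaxOn ⟨a, ha⟩ (φ₁ + φ₂).continuous.continuousOn
    exact ⟨f, hf, hfmax,
      inter_tr_subset_tr_of_isMaxOn hCc.isClosed hCv hCs hφ ha hb hf ha' hb' hfmax⟩

lemma exists_mem_spindle_apply_eq_sub (hCc : IsCompact C) (hCv : Convex ℝ C)
    (hCs : ∀ x ∈ C, -x ∈ C) {q q' : P2} (hqq' : (interior (tr C q) ∩ tr C q').Nonempty)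
    (u : P2 →L[ℝ] ℝ) {m : P2} (hm : m ∈ C) (hmmax : IsMaxOn u C m) :
    ∃ e ∈ tr C q ∩ tr C q', ∃ ζ ∈ spindle C q q', u ζ = u e - u m := by
  obtain ⟨e, he, hemax⟩ :=
    ((isCompact_tr hCc q).inter_right (isCompact_tr hCc q').isClosed).exists_isMaxOn
      (hqq'.mono (inter_subset_inter_left _ interior_subset)) u.continuous.continuousOn
  obtain ⟨φ₁, φ₂, rfl, h₁, h₂⟩ := exists_add_eq_isMaxOn_of_isMaxOn_inter (convex_tr hCv q)
    (convex_tr hCv q') hqq' he.1 he.2 hemax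
  obtain ⟨f, hf, hfmax, hsub⟩ := exists_isMaxOn_add_inter_tr_subset hCc hCv hCs
    (mem_tr.1 he.1) (mem_tr.1 he.2) (isMaxOn_sub_of_isMaxOn_tr h₁) (isMaxOn_sub_of_isMaxOn_tr h₂)
  refine ⟨e, he, e - f, (mem_spindle_iff hCs).2 fun x hx => ?_, ?_⟩
  · have hx' : e - x ∈ tr C (e - q) ∩ tr C (e - q') := by
      simp only [mem_inter_iff, mem_tr, sub_sub_sub_cancel_left] at hx ⊢
      exact ⟨by simpa using hCs _ hx.1, by simpa using hCs _ hx.2⟩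
    have := hCs _ (mem_tr.1 (hsub hx'))
    rwa [mem_tr, show x - (e - f) = -(e - x - f) by abel]
  · have : (φ₁ + φ₂) f = (φ₁ + φ₂) m := le_antisymm (hmmax hf) (hfmax hm)
    rw [map_sub, this]

end SymmetricDisk

section Helly

lemma Finset.exists_subset_pair_of_card_le_two {ι : Type*} [DecidableEq ι] {I : Finset ι}
    (hI : I.card ≤ 2) (hne : I.Nonempty) : ∃ i j, I ⊆ {i, j} := by
  obtain ⟨i, hi⟩ := hne
  have : Nonempty ι := ⟨i⟩
  obtain ⟨j, hj⟩ := Finset.card_le_one_iff_subset_singleton.1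
    (show (I.erase i).card ≤ 1 by rw [Finset.card_erase_of_mem hi]; omega)
  refine ⟨i, j, fun k hk => ?_⟩
  by_cases hki : k = i
  · simp [hki]
  · simpa [hki] using hj (Finset.mem_erase.2 ⟨hki, hk⟩)

theorem exists_apply_eq_forall_mem_of_pairwise {E ι : Type*} [NormedAddCommGroup E]
    [NormedSpace ℝ E] (hE : Module.finrank ℝ E = 2) {F : ι → Set E}
    (hconv : ∀ i, Convex ℝ (F i)) (hcomp : ∀ i, IsCompact (F i)) {f : E →L[ℝ] ℝ} (hf : f ≠ 0)
    {a : ℝ} (h : ∀ i j, ∃ x ∈ F i ∩ F j, f x = a) : ∃ x, f x = a ∧ ∀ i, x ∈ F i := by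
  classical
  have : FiniteDimensional ℝ E := Module.finite_of_finrank_eq_succ hE
  have hsurj : Function.Surjective f := by
    obtain ⟨v, hv⟩ : ∃ v, f v ≠ 0 := by
      by_contra! h
      exact hf (ContinuousLinearMap.ext h)
    exact fun t => ⟨(t / f v) • v, by simp [hv]⟩
  obtain ⟨x₀, hx₀⟩ := hsurj a
  set W := LinearMap.ker (f : E →ₗ[ℝ] ℝ)
  have hW : Module.finrank ℝ W = 1 := by
    have := LinearMap.finrank_range_add_finrank_ker (f : E →ₗ[ℝ] ℝ)
    rw [LinearMap.range_eq_top.2 hsurj, finrank_top, Module.finrank_self, hE] at this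
    simp only [W]
    omega
  -- `g` parametrizes the line `f = a`
  set g : W → E := fun w => x₀ + (w : E)
  have hg : Topology.IsClosedEmbedding g :=
    (Homeomorph.addLeft x₀).isClosedEmbedding.comp f.isClosed_ker.isClosedEmbedding_subtypeVal
  have hgf : ∀ x, f x = a → ∃ w, g w = x := fun x hx =>
    ⟨⟨x - x₀, by simp [W, hx, hx₀]⟩, add_sub_cancel x₀ x⟩
  obtain ⟨w, hw⟩ := Convex.helly_theorem_compact' (𝕜 := ℝ) (F := fun i => g ⁻¹' F i)
    (fun i => ((hconv i).translate_preimage_right x₀).linear_preimage W.subtype)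
    (fun i => hg.isCompact_preimage (hcomp i)) fun I hI => by
      rcases I.eq_empty_or_nonempty with rfl | hne
      · simp
      obtain ⟨i, j, hij⟩ := Finset.exists_subset_pair_of_card_le_two (by rwa [hW] at hI) hne
      obtain ⟨x, hx, hfx⟩ := h i j
      obtain ⟨w, rfl⟩ := hgf x hfx
      refine ⟨w, mem_iInter₂.2 fun k hk => ?_⟩
      rcases Finset.mem_insert.1 (hij hk) with rfl | hk
      · exact hx.1
      · exact Finset.mem_singleton.1 hk ▸ hx.2
  have hw₀ : f w = 0 := w.2
  exact ⟨g w, by simp [g, hx₀, hw₀], fun i => mem_iInter.1 hw i⟩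

end Helly

namespace CConvexSet

open Pointwise

variable {C K : Set P2}

lemma exists_mem_tr (hK : CConvexSet C K) (hne : K ≠ univ) {p r : P2} (hp : p ∈ K)
    (hr : r ∈ K) : ∃ x, p ∈ tr C x ∧ r ∈ tr C x :=
  exists_mem_tr_of_spindle_ne_univ fun h => hne (eq_univ_of_univ_subset (h ▸ hK p hp r hr))

lemma convex (hK : CConvexSet C K) (hCv : Convex ℝ C) : Convex ℝ K :=
  fun p hp r hr _ _ hα hβ hαβ =>
    hK p hp r hr (mem_iInter₂.2 fun x hx => convex_tr hCv x hx.1 hx.2 hα hβ hαβ)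

lemma isBounded (hK : CConvexSet C K) (hne : K ≠ univ) (hC : Bornology.IsBounded C) :
    Bornology.IsBounded K := by
  rcases K.eq_empty_or_nonempty with rfl | ⟨q, hq⟩
  · exact Bornology.isBounded_empty
  refine ((hC.sub hC).add (Bornology.isBounded_singleton (x := q))).subset fun p hp => ?_
  obtain ⟨x, hpx, hqx⟩ := hK.exists_mem_tr hne hp hq
  exact ⟨(p - x) - (q - x), sub_mem_sub (mem_tr.1 hpx) (mem_tr.1 hqx), q, rfl, by simp⟩

lemma apply_sub_apply_le (hK : CConvexSet C K) (hne : K ≠ univ) (hCs : ∀ x ∈ C, -x ∈ C)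
    {f : P2 →L[ℝ] ℝ} {m : P2} (hm : IsMaxOn f C m) {p r : P2} (hp : p ∈ K) (hr : r ∈ K) :
    f p - f r ≤ 2 * f m := by
  obtain ⟨x, hpx, hrx⟩ := hK.exists_mem_tr hne hp hr
  have h₁ : f (p - x) ≤ f m := hm (mem_tr.1 hpx)
  have h₂ : f (-(r - x)) ≤ f m := hm (hCs _ (mem_tr.1 hrx))
  rw [map_sub] at h₁
  rw [map_neg, map_sub] at h₂
  linarith

lemma exists_mem_inter_apply_eq_of_nonempty_interior (hK : CConvexSet C K) (hne : K ≠ univ)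
    (hCc : IsCompact C) (hCv : Convex ℝ C) (hCs : ∀ x ∈ C, -x ∈ C) {f : P2 →L[ℝ] ℝ} {k m : P2}
    (hk : k ∈ K) (hkmax : IsMaxOn f K k) (hm : m ∈ C) (hmmax : IsMaxOn f C m) {p r : P2}
    (hp : p ∈ K) (hr : r ∈ K) (hpr : (interior (tr C p) ∩ tr C r).Nonempty) :
    ∃ x ∈ tr C p ∩ tr C r, f x = f k - f m := by
  obtain ⟨e₁, he₁, ζ₁, hζ₁, h₁⟩ := exists_mem_spindle_apply_eq_sub hCc hCv hCs hpr f hm hmmax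
  obtain ⟨e₂, he₂, ζ₂, hζ₂, h₂⟩ := exists_mem_spindle_apply_eq_sub hCc hCv hCs hpr (-f)
    (hCs m hm) fun c hc => by simpa using hmmax (hCs c hc)
  have hlow := hK.apply_sub_apply_le hne hCs hmmax hk (hK p hp r hr hζ₁)
  have hup : f ζ₂ ≤ f k := hkmax (hK p hp r hr hζ₂)
  simp only [neg_apply, map_neg, neg_neg] at h₂
  obtain ⟨x, hx, hfx⟩ :=
    ((convex_tr hCv p).inter (convex_tr hCv r)).isPreconnected.intermediate_value he₂ he₁
      f.continuous.continuousOn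
      (show f k - f m ∈ Icc (f e₂) (f e₁) from ⟨by linarith, by linarith⟩)
  exact ⟨x, hx, hfx⟩

lemma exists_mem_inter_apply_eq (hK : CConvexSet C K) (hne : K ≠ univ) (hCc : IsCompact C)
    (hCv : Convex ℝ C) (hCs : ∀ x ∈ C, -x ∈ C) (h0 : (0 : P2) ∈ interior C)
    {f : P2 →L[ℝ] ℝ} {k m : P2} (hk : k ∈ K) (hkmax : IsMaxOn f K k) (hm : m ∈ C)
    (hmmax : IsMaxOn f C m) {p r : P2} (hp : p ∈ K) (hr : r ∈ K) :
    ∃ x ∈ tr C p ∩ tr C r, f x = f k - f m := by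
  -- the `s` for which `p` and `p + s • (r - p)` have a common centre on the line form a compact
  -- set containing `[0, 1)`
  set S : Set (ℝ × P2) := {q | q.1 ∈ Icc 0 1 ∧ q.2 - p ∈ C ∧ q.2 - (p + q.1 • (r - p)) ∈ C ∧
    f q.2 = f k - f m}
  have hS : IsCompact (Prod.fst '' S) := by
    refine ((isCompact_Icc.prod (isCompact_tr hCc p)).of_isClosed_subset ?_
      fun q hq => ⟨hq.1, mem_tr.2 hq.2.1⟩).image continuous_fst
    exact (isClosed_Icc.preimage continuous_fst).inter
      ((hCc.isClosed.preimage (by fun_prop)).inter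
        ((hCc.isClosed.preimage (by fun_prop)).inter (isClosed_eq (by fun_prop) continuous_const)))
  have hIco : Ico (0 : ℝ) 1 ⊆ Prod.fst '' S := by
    intro s hs
    obtain ⟨x, hpx, hrx⟩ := hK.exists_mem_tr hne hp hr
    rw [mem_tr_comm hCs, mem_tr] at hpx hrx
    have hw : p + s • (x - p) ∈ interior (tr C p) ∩ tr C (p + s • (r - p)) := by
      rw [interior_tr, mem_inter_iff, mem_tr, mem_tr, add_sub_cancel_left,
        add_sub_add_left_eq_sub, ← smul_sub, sub_sub_sub_cancel_right]
      refine ⟨?_, hCv.smul_mem_of_zero_mem (interior_subset h0) hrx ⟨hs.1, hs.2.le⟩⟩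
      simpa using hCv.combo_interior_self_mem_interior h0 hpx (sub_pos.2 hs.2) hs.1
        (sub_add_cancel 1 s)
    obtain ⟨y, hy, hfy⟩ := hK.exists_mem_inter_apply_eq_of_nonempty_interior hne hCc hCv hCs hk
      hkmax hm hmmax hp ((hK.convex hCv).add_smul_sub_mem hp hr (Ico_subset_Icc_self hs)) ⟨_, hw⟩
    exact ⟨(s, y), ⟨Ico_subset_Icc_self hs, mem_tr.1 hy.1, mem_tr.1 hy.2, hfy⟩, rfl⟩
  have h1 : (1 : ℝ) ∈ Prod.fst '' S := hS.isClosed.closure_subset_iff.2 hIco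
    (by rw [closure_Ico zero_ne_one]; exact right_mem_Icc.2 zero_le_one)
  obtain ⟨⟨_, x⟩, ⟨-, hpx, hrx, hfx⟩, rfl⟩ := h1
  exact ⟨x, ⟨mem_tr.2 hpx, mem_tr.2 (by simpa using hrx)⟩, hfx⟩

lemma exists_subset_tr_notMem (hK : CConvexSet C K) (hKc : IsClosed K) (hne : K ≠ univ)
    (hCc : IsCompact C) (hCv : Convex ℝ C) (hCs : ∀ x ∈ C, -x ∈ C)
    (h0 : (0 : P2) ∈ interior C) {y : P2} (hy : y ∉ K) : ∃ x, K ⊆ tr C x ∧ y ∉ tr C x := by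
  rcases K.eq_empty_or_nonempty with rfl | hKne
  · obtain ⟨w, hw⟩ := (ne_univ_iff_exists_notMem C).1 hCc.ne_univ
    exact ⟨y - w, empty_subset _, fun h => hw (by simpa [mem_tr] using h)⟩
  have hKcomp : IsCompact K :=
    Metric.isCompact_of_isClosed_isBounded hKc (hK.isBounded hne hCc.isBounded)
  obtain ⟨f, β, hfK, hfy⟩ := geometric_hahn_banach_closed_point (hK.convex hCv) hKc hy
  obtain ⟨k, hk, hkmax⟩ := hKcomp.exists_isMaxOn hKne f.continuous.continuousOn
  obtain ⟨m, hm, hmmax⟩ := hCc.exists_isMaxOn ⟨0, interior_subset h0⟩ f.continuous.continuousOn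
  have hf : f ≠ 0 := by
    rintro rfl
    have := hfK k hk
    rw [zero_apply] at this hfy
    linarith
  obtain ⟨x, hfx, hx⟩ := exists_apply_eq_forall_mem_of_pairwise (F := fun p : K => tr C p)
    (by simp) (fun p => convex_tr hCv p) (fun p => isCompact_tr hCc p) hf
    fun p r => hK.exists_mem_inter_apply_eq hne hCc hCv hCs h0 hk hkmax hm hmmax p.2 r.2
  refine ⟨x, fun p hp => (mem_tr_comm hCs).2 (hx ⟨p, hp⟩), fun hyx => ?_⟩
  have : f (y - x) ≤ f m := hmmax (mem_tr.1 hyx)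
  rw [map_sub] at this
  linarith [hfK k hk]

lemma isCIntersection (hK : CConvexSet C K) (hKc : IsClosed K) (hne : K ≠ univ)
    (hCc : IsCompact C) (hCv : Convex ℝ C) (hCs : ∀ x ∈ C, -x ∈ C)
    (h0 : (0 : P2) ∈ interior C) : IsCIntersection C K := by
  refine ⟨{x | K ⊆ tr C x}, subset_antisymm (fun p hp => mem_iInter₂.2 fun x hx => hx hp)
    fun y hy => ?_⟩
  by_contra hyK
  obtain ⟨x, hKx, hyx⟩ := hK.exists_subset_tr_notMem hKc hne hCc hCv hCs h0 hyK
  exact hyx (mem_iInter₂.1 hy x hKx)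

end CConvexSet

lemma IsCIntersection.cConvexSet {C K : Set P2} (h : IsCIntersection C K) : CConvexSet C K := by
  obtain ⟨T, rfl⟩ := h
  intro p hp q hq z hz
  exact mem_iInter₂.2 fun x hx => mem_iInter₂.1 hz x ⟨mem_iInter₂.1 hp x hx, mem_iInter₂.1 hq x hx⟩

theorem stmt8 (C K : Set P2) (hC : SymDisk C) (hK : IsClosed K) (hne : K ≠ Set.univ) :
    CConvexSet C K ↔ IsCIntersection C K := by
  obtain ⟨hCc, hCv, hCi, hCs⟩ := hC
  exact ⟨fun hK' => hK'.isCIntersection hK hne hCc hCv hCs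
    (zero_mem_interior_of_neg_mem hCv hCi hCs), IsCIntersection.cConvexSet⟩
end
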